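/- Let ϖ ∈ H¹(ℝ^{N-1}) ∩ BV(ℝ^{N-1}) ∩ L¹(ℝ^{N-1}). For any τ > 0 there exists r₀ > 0 with r₀ ≤ τ such that for all r ∈ (0, r₀], the function ⟦ϖ⟧_r(ξ̃,ξ_N) := max(1-ξ_N/r,0)·ϖ(ξ̃) on ℝ^N_+ satisfies: ⟦ϖ⟧_r vanishes a.e. where ξ_N > r, its trace on {ξ_N = 0} equals ϖ, ‖⟦ϖ⟧_r‖_{L²(ℝ^N_+)} ≤ τ, and the total variation |D⟦ϖ⟧_r|(ℝ^N_+) ≤ ‖ϖ‖_{L¹(ℝ^{N-1})} + τ. -/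

import Mathlib

noncomputable section
open MeasureTheory Filter Topology Set Metric
open scoped RealInnerProductSpace ENNReal NNReal

abbrev Euc (n : ℕ) := EuclideanSpace ℝ (Fin n)

def divg {n : ℕ} (ψ : Euc n → Euc n) (x : Euc n) : ℝ :=
  ∑ i, ⟪fderiv ℝ ψ x (EuclideanSpace.single i 1), EuclideanSpace.single i 1⟫

def IsTestVF {n : ℕ} (U : Set (Euc n)) (ψ : Euc n → Euc n) : Prop :=
  ContDiff ℝ (⊤ : ℕ∞) ψ ∧ HasCompactSupport ψ ∧ tsupport ψ ⊆ U

def HasWeakGradOn {n : ℕ} (u : Euc n → ℝ) (G : Euc n → Euc n) (U : Set (Euc n)) : Prop :=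
  ∀ ψ : Euc n → Euc n, IsTestVF U ψ →
    ∫ x in U, u x * divg ψ x = - ∫ x in U, ⟪G x, ψ x⟫

def TraceEq {n : ℕ} (Ω : Set (Euc n)) (μΓ : Measure (Euc n)) (nΓ : Euc n → Euc n)
    (u : Euc n → ℝ) (G : Euc n → Euc n) (uΓ : Euc n → ℝ) : Prop :=
  ∀ ψ : Euc n → Euc n, ContDiff ℝ (⊤ : ℕ∞) ψ → HasCompactSupport ψ →
    ∫ x, uΓ x * ⟪ψ x, nΓ x⟫ ∂μΓ =
      (∫ x in Ω, u x * divg ψ x) + ∫ x in Ω, ⟪G x, ψ x⟫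

def BVTraceEq {n : ℕ} (Ω : Set (Euc n)) (μΓ : Measure (Euc n)) (nΓ : Euc n → Euc n)
    (u : Euc n → ℝ) (ν : Measure (Euc n)) (σ : Euc n → Euc n) (uΓ : Euc n → ℝ) : Prop :=
  ∀ ψ : Euc n → Euc n, ContDiff ℝ (⊤ : ℕ∞) ψ → HasCompactSupport ψ →
    ∫ x, uΓ x * ⟪ψ x, nΓ x⟫ ∂μΓ =
      (∫ x in Ω, u x * divg ψ x) + ∫ x, ⟪σ x, ψ x⟫ ∂ν

def tangDiv {n : ℕ} (nΓ : Euc n → Euc n) (ψ : Euc n → Euc n) (x : Euc n) : ℝ :=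
  divg ψ x - ⟪fderiv ℝ ψ x (nΓ x), nΓ x⟫

def HasSurfGrad {n : ℕ} (Γ : Set (Euc n)) (μΓ : Measure (Euc n)) (nΓ : Euc n → Euc n)
    (u : Euc n → ℝ) (G : Euc n → Euc n) : Prop :=
  ∀ ψ : Euc n → Euc n, ContDiff ℝ (⊤ : ℕ∞) ψ → HasCompactSupport ψ →
    (∀ x ∈ Γ, ⟪ψ x, nΓ x⟫ = 0) →
    ∫ x, u x * tangDiv nΓ ψ x ∂μΓ = - ∫ x, ⟪G x, ψ x⟫ ∂μΓ

def GaussGreen {n : ℕ} (Ω : Set (Euc n)) (μΓ : Measure (Euc n)) (nΓ : Euc n → Euc n) : Prop :=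
  ∀ v : Euc n → ℝ, ContDiff ℝ (⊤ : ℕ∞) v → ∀ ψ : Euc n → Euc n, ContDiff ℝ (⊤ : ℕ∞) ψ → HasCompactSupport ψ →
    ∫ x, v x * ⟪ψ x, nΓ x⟫ ∂μΓ =
      (∫ x in Ω, v x * divg ψ x) + ∫ x in Ω, ⟪gradient v x, ψ x⟫

def PhiStar {n : ℕ} (Ω : Set (Euc n)) (μΓ : Measure (Euc n)) (nΓ : Euc n → Euc n) (ε : ℝ)
    (w wΓ : Euc n → ℝ) : ℝ≥0∞ :=
  (⨆ ψ : {ψ : Euc n → Euc n // ContDiff ℝ (⊤ : ℕ∞) ψ ∧ HasCompactSupport ψ ∧ ∀ x, ‖ψ x‖ ≤ 1},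
    ENNReal.ofReal ((∫ x in Ω, w x * divg ψ.1 x) - ∫ x, wΓ x * ⟪ψ.1 x, nΓ x⟫ ∂μΓ))
  + ⨆ ψ : {ψ : Euc n → Euc n // ContDiff ℝ (⊤ : ℕ∞) ψ ∧ HasCompactSupport ψ ∧
        ∀ x ∈ frontier Ω, ⟪ψ x, nΓ x⟫ = 0},
    ENNReal.ofReal (ε^2/2 * (2 * ∫ x, wΓ x * tangDiv nΓ ψ.1 x ∂μΓ - ∫ x, ‖ψ.1 x‖^2 ∂μΓ))

def PhiReg {n : ℕ} (Ω : Set (Euc n)) (μΓ : Measure (Euc n)) (nΓ : Euc n → Euc n) (ε : ℝ)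
    (f : Euc n → ℝ) (κ : ℝ) (w wΓ : Euc n → ℝ) : ℝ≥0∞ :=
  sInf {e : ℝ≥0∞ | ∃ G GΓ : Euc n → Euc n,
    HasWeakGradOn w G Ω ∧ MemLp w 2 (volume.restrict Ω) ∧ MemLp G 2 (volume.restrict Ω) ∧
    TraceEq Ω μΓ nΓ w G wΓ ∧
    HasSurfGrad (frontier Ω) μΓ nΓ wΓ GΓ ∧ MemLp wΓ 2 μΓ ∧ MemLp GΓ 2 μΓ ∧
    e = ENNReal.ofReal ((∫ x in Ω, (f (G x) + κ^2/2 * ‖G x‖^2)) +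
          ε^2/2 * ∫ x, ‖GΓ x‖^2 ∂μΓ)}

def HasLipschitzBoundary {d : ℕ} (Ω : Set (Euc (d+1))) : Prop :=
  ∀ x ∈ frontier Ω, ∃ (r : ℝ), 0 < r ∧ ∃ (e : Euc (d+1) ≃ₗᵢ[ℝ] Euc (d+1)) (c : Euc (d+1))
      (L : ℝ≥0) (f : Euc d → ℝ), LipschitzWith L f ∧
    Ω ∩ ball x r = {y | f (WithLp.toLp 2 (fun i : Fin d => e (y - c) i.castSucc)) < e (y - c) (Fin.last d)} ∩ ball x r

def ProperFn {X : Type*} (Ψ : X → EReal) : Prop := (∃ z, Ψ z ≠ ⊤) ∧ ∀ z, Ψ z ≠ ⊥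

def ConvexFn {X : Type*} [AddCommGroup X] [Module ℝ X] (Ψ : X → EReal) : Prop :=
  ∀ z w : X, ∀ t : ℝ, 0 ≤ t → t ≤ 1 →
    Ψ (t • z + (1 - t) • w) ≤ (t : EReal) * Ψ z + ((1 - t : ℝ) : EReal) * Ψ w

def InSubdiff {X : Type*} [NormedAddCommGroup X] [InnerProductSpace ℝ X]
    (Ψ : X → EReal) (z zs : X) : Prop :=
  Ψ z ≠ ⊤ ∧ ∀ w : X, ((⟪zs, w - z⟫ : ℝ) : EReal) + Ψ z ≤ Ψ w

def MoscoConv {X : Type*} [NormedAddCommGroup X] [InnerProductSpace ℝ X]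
    (Ψn : ℕ → X → EReal) (Ψ : X → EReal) : Prop :=
  (∀ (z : X) (zn : ℕ → X),
      (∀ y : X, Tendsto (fun k => (⟪zn k, y⟫ : ℝ)) atTop (𝓝 ⟪z, y⟫)) →
      Ψ z ≤ Filter.liminf (fun k => Ψn k (zn k)) atTop) ∧
  (∀ z : X, Ψ z ≠ ⊤ → ∃ zn : ℕ → X, Tendsto zn atTop (𝓝 z) ∧
      Tendsto (fun k => Ψn k (zn k)) atTop (𝓝 (Ψ z)))

def Euc.init {d : ℕ} (x : Euc (d+1)) : Euc d := WithLp.toLp 2 (fun i : Fin d => x i.castSucc)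

def Euc.snoc {d : ℕ} (ξ : Euc d) (t : ℝ) : Euc (d+1) := WithLp.toLp 2 (Fin.snoc (WithLp.ofLp ξ) t : Fin (d+1) → ℝ)

def eTV {n : ℕ} (u : Euc n → ℝ) (U : Set (Euc n)) : ℝ≥0∞ :=
  ⨆ ψ : {ψ : Euc n → Euc n // IsTestVF U ψ ∧ ∀ x, ‖ψ x‖ ≤ 1},
    ENNReal.ofReal (∫ x in U, u x * divg ψ.1 x)

def IsBVRep {n : ℕ} (U : Set (Euc n)) (u : Euc n → ℝ) (ν : Measure (Euc n))
    (σ : Euc n → Euc n) : Prop :=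
  (∀ᵐ x ∂ν, ‖σ x‖ = 1) ∧
  ∀ ψ : Euc n → Euc n, IsTestVF U ψ →
    ∫ x in U, u x * divg ψ x = - ∫ x, ⟪σ x, ψ x⟫ ∂ν

variable {d : ℕ}

def Ed (d : ℕ) : Euc (d+1) ≃ᵐ ℝ × Euc d :=
  (MeasurableEquiv.toLp 2 (Fin (d+1) → ℝ)).symm.trans
    ((MeasurableEquiv.piFinSuccAbove (fun _ => ℝ) (Fin.last d)).trans
      ((MeasurableEquiv.refl ℝ).prodCongr (MeasurableEquiv.toLp 2 (Fin d → ℝ))))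

lemma hEd : MeasurePreserving (Ed d) volume volume :=
  ((EuclideanSpace.volume_preserving_symm_measurableEquiv_toLp (Fin (d+1))).trans
    ((volume_preserving_piFinSuccAbove (fun _ => ℝ) (Fin.last d)).trans
      ((MeasurePreserving.id volume).prod
        (EuclideanSpace.volume_preserving_symm_measurableEquiv_toLp (Fin d)).symm)))

lemma Ed_apply (x : Euc (d+1)) : Ed d x = (x (Fin.last d), Euc.init x) := by
  ext <;> simp [Ed, Euc.init, Fin.succAbove_last] <;> rfl

lemma Ed_symm_apply (t : ℝ) (ξ : Euc d) : (Ed d).symm (t, ξ) = Euc.snoc ξ t := by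
  ext j
  simp [Ed, Euc.snoc, MeasurableEquiv.piFinSuccAbove,
    Fin.insertNthEquiv, Fin.insertNth_last']
  rfl

def initL (d : ℕ) : Euc (d+1) →L[ℝ] Euc d :=
  (PiLp.continuousLinearEquiv 2 ℝ (fun _ : Fin d => ℝ)).symm.toContinuousLinearMap.comp
    (ContinuousLinearMap.pi (fun j : Fin d => EuclideanSpace.proj (j.castSucc)))

lemma initL_apply (x : Euc (d+1)) : initL d x = Euc.init x := rfl

def snocL (d : ℕ) : Euc d →L[ℝ] Euc (d+1) :=
  (PiLp.continuousLinearEquiv 2 ℝ (fun _ : Fin (d+1) => ℝ)).symm.toContinuousLinearMap.comp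
    (ContinuousLinearMap.pi (Fin.lastCases 0 (fun j => EuclideanSpace.proj j)))

lemma snocL_apply (ξ : Euc d) : snocL d ξ = Euc.snoc ξ 0 := by
  ext j
  refine Fin.lastCases ?_ (fun i => ?_) j <;>
    simp [snocL, Euc.snoc, ContinuousLinearMap.pi_apply]

lemma init_snoc (ξ : Euc d) (t : ℝ) : Euc.init (Euc.snoc ξ t) = ξ := by
  ext i; simp [Euc.init, Euc.snoc]

lemma snoc_last (ξ : Euc d) (t : ℝ) : (Euc.snoc ξ t) (Fin.last d) = t := by
  simp [Euc.snoc]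

lemma norm_init_le (v : Euc (d+1)) : ‖Euc.init v‖ ≤ ‖v‖ := by
  rw [EuclideanSpace.norm_eq, EuclideanSpace.norm_eq]
  apply Real.sqrt_le_sqrt
  have h : ∑ i : Fin d, ‖(Euc.init v) i‖ ^ 2 ≤ ∑ i, ‖v i‖ ^ 2 := by
    rw [Fin.sum_univ_castSucc]
    exact le_add_of_nonneg_right (sq_nonneg _)
  exact h

lemma snoc_eq (ξ : Euc d) (t : ℝ) :
    Euc.snoc ξ t = snocL d ξ + t • EuclideanSpace.single (Fin.last d) (1:ℝ) := by
  ext j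
  refine Fin.lastCases ?_ (fun i => ?_) j <;>
    simp [snocL_apply, Euc.snoc, EuclideanSpace.single_apply, (Fin.castSucc_lt_last _).ne]

lemma hasDerivAt_snoc (ξ : Euc d) (t : ℝ) :
    HasDerivAt (fun s => Euc.snoc ξ s) (EuclideanSpace.single (Fin.last d) (1:ℝ)) t := by
  have h : (fun s : ℝ => Euc.snoc ξ s)
      = fun s => snocL d ξ + s • EuclideanSpace.single (Fin.last d) (1:ℝ) := by
    funext s; exact snoc_eq ξ s
  rw [h]
  simpa using ((hasDerivAt_id t).smul_const
    (EuclideanSpace.single (Fin.last d) (1:ℝ))).const_add (snocL d ξ)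

lemma snocL_single (j : Fin d) :
    snocL d (EuclideanSpace.single j (1:ℝ)) = EuclideanSpace.single j.castSucc (1:ℝ) := by
  rw [snocL_apply]; ext i
  refine Fin.lastCases ?_ (fun k => ?_) i
  · simp [Euc.snoc, EuclideanSpace.single_apply, (Fin.castSucc_lt_last _).ne']
  · simp [Euc.snoc, EuclideanSpace.single_apply, Fin.castSucc_inj, Pi.single_apply]

lemma abs_coord_le {n : ℕ} (v : Euc n) (i : Fin n) : |v i| ≤ ‖v‖ := by
  have h := abs_real_inner_le_norm (EuclideanSpace.single i (1:ℝ)) v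
  simpa [EuclideanSpace.inner_single_left, EuclideanSpace.norm_single] using h

def tanD {d : ℕ} (ψ : Euc (d+1) → Euc (d+1)) (x : Euc (d+1)) : ℝ :=
  ∑ j : Fin d, ⟪fderiv ℝ ψ x (EuclideanSpace.single j.castSucc 1),
    EuclideanSpace.single j.castSucc 1⟫

def norD {d : ℕ} (ψ : Euc (d+1) → Euc (d+1)) (x : Euc (d+1)) : ℝ :=
  ⟪fderiv ℝ ψ x (EuclideanSpace.single (Fin.last d) 1),
    EuclideanSpace.single (Fin.last d) 1⟫

lemma divg_eq (ψ : Euc (d+1) → Euc (d+1)) (x : Euc (d+1)) :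
    divg ψ x = tanD ψ x + norD ψ x := by
  rw [divg, Fin.sum_univ_castSucc]; rfl

lemma cont_fderiv_inner {n : ℕ} {ψ : Euc n → Euc n} (hψ : ContDiff ℝ (⊤ : ℕ∞) ψ) (a b : Euc n) :
    Continuous fun x => (⟪fderiv ℝ ψ x a, b⟫ : ℝ) :=
  ((hψ.continuous_fderiv (by simp)).clm_apply continuous_const).inner continuous_const

lemma bdd_fderiv_inner {n : ℕ} {ψ : Euc n → Euc n} (hψ : ContDiff ℝ (⊤ : ℕ∞) ψ)
    (hψc : HasCompactSupport ψ) (a b : Euc n) :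
    ∃ C, ∀ x, ‖(⟪fderiv ℝ ψ x a, b⟫ : ℝ)‖ ≤ C := by
  refine HasCompactSupport.exists_bound_of_continuous ?_ (cont_fderiv_inner hψ a b)
  refine HasCompactSupport.intro hψc ?_
  intro x hx
  have : fderiv ℝ ψ x = 0 := by
    by_contra h
    exact hx (support_fderiv_subset ℝ (by simpa [Function.mem_support] using h))
  simp [this]

lemma hasFDerivAt_comp_snoc {ψ : Euc (d+1) → Euc (d+1)} (hψ : ContDiff ℝ (⊤ : ℕ∞) ψ)
    (t : ℝ) (ξ : Euc d) :
    HasFDerivAt (fun η => ψ (Euc.snoc η t))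
      ((fderiv ℝ ψ (Euc.snoc ξ t)).comp (snocL d)) ξ := by
  have h1 : HasFDerivAt (fun η : Euc d => Euc.snoc η t) (snocL d) ξ := by
    have h : (fun η : Euc d => Euc.snoc η t)
        = fun η => snocL d η + t • EuclideanSpace.single (Fin.last d) (1:ℝ) := by
      funext η; exact snoc_eq η t
    rw [h]
    exact (snocL d).hasFDerivAt.add_const _
  exact ((hψ.differentiable (by simp)) (Euc.snoc ξ t)).hasFDerivAt.comp ξ h1

lemma contSnoc (t : ℝ) : Continuous (fun η : Euc d => Euc.snoc η t) := by
  have h : (fun η : Euc d => Euc.snoc η t)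
      = fun η => snocL d η + t • EuclideanSpace.single (Fin.last d) (1:ℝ) :=
    funext fun η => snoc_eq η t
  rw [h]; exact (snocL d).continuous.add continuous_const

lemma divg_Phi {ψ : Euc (d+1) → Euc (d+1)} (hψ : ContDiff ℝ (⊤ : ℕ∞) ψ) (t : ℝ) (ξ : Euc d) :
    divg (fun η => initL d (ψ (Euc.snoc η t))) ξ = tanD ψ (Euc.snoc ξ t) := by
  have hΦ : HasFDerivAt (fun η => initL d (ψ (Euc.snoc η t)))
      ((initL d).comp ((fderiv ℝ ψ (Euc.snoc ξ t)).comp (snocL d))) ξ :=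
    ((initL d).hasFDerivAt).comp ξ (hasFDerivAt_comp_snoc hψ t ξ)
  rw [divg, hΦ.fderiv]
  unfold tanD
  refine Finset.sum_congr rfl fun j _ => ?_
  rw [ContinuousLinearMap.comp_apply, ContinuousLinearMap.comp_apply, snocL_single]
  rw [initL_apply]
  simp [EuclideanSpace.inner_single_right, Euc.init]

lemma Phi_testVF {ψ : Euc (d+1) → Euc (d+1)} (hψ : ContDiff ℝ (⊤ : ℕ∞) ψ)
    (hψc : HasCompactSupport ψ) (t : ℝ) :
    IsTestVF Set.univ (fun η => initL d (ψ (Euc.snoc η t))) := by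
  refine ⟨?_, ?_, subset_univ _⟩
  · refine ((initL d).contDiff).comp (hψ.comp ?_)
    have h : (fun η : Euc d => Euc.snoc η t)
        = fun η => snocL d η + t • EuclideanSpace.single (Fin.last d) (1:ℝ) :=
      funext fun η => snoc_eq η t
    rw [h]; exact (snocL d).contDiff.add contDiff_const
  · obtain ⟨R, hR⟩ := (isBounded_iff_forall_norm_le).1 hψc.isBounded
    refine HasCompactSupport.intro
      (K := (fun η : Euc d => Euc.snoc η t) ⁻¹' tsupport ψ) ?_ ?_
    · refine Metric.isCompact_of_isClosed_isBounded
        ((isClosed_tsupport ψ).preimage (contSnoc t)) ?_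
      rw [isBounded_iff_forall_norm_le]
      refine ⟨R, fun η hη => ?_⟩
      calc ‖η‖ = ‖Euc.init (Euc.snoc η t)‖ := by rw [init_snoc]
        _ ≤ ‖Euc.snoc η t‖ := norm_init_le _
        _ ≤ R := hR _ hη
    · intro η hη
      have h0 : ψ (Euc.snoc η t) = 0 := image_eq_zero_of_notMem_tsupport hη
      simp [h0]

lemma norm_Phi_le {ψ : Euc (d+1) → Euc (d+1)} (hb : ∀ x, ‖ψ x‖ ≤ 1) (t : ℝ) (ξ : Euc d) :
    ‖initL d (ψ (Euc.snoc ξ t))‖ ≤ 1 := by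
  rw [initL_apply]
  exact (norm_init_le _).trans (hb _)

lemma contW {r : ℝ} : Continuous (fun t : ℝ => max (1 - t/r) 0) :=
  ((continuous_const.sub (continuous_id.div_const r)).max continuous_const)

lemma contSnocT (ξ : Euc d) : Continuous (fun t : ℝ => Euc.snoc ξ t) := by
  have h : (fun t : ℝ => Euc.snoc ξ t)
      = fun t => snocL d ξ + t • EuclideanSpace.single (Fin.last d) (1:ℝ) :=
    funext fun t => snoc_eq ξ t
  rw [h]; exact continuous_const.add (continuous_id.smul continuous_const)

lemma normal_1d {r : ℝ} (hr : 0 < r) {ψ : Euc (d+1) → Euc (d+1)}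
    (hψ : IsTestVF {x : Euc (d+1) | 0 < x (Fin.last d)} ψ)
    (hb : ∀ x, ‖ψ x‖ ≤ 1) (ξ : Euc d) :
    |∫ t in Ioi (0:ℝ), max (1 - t/r) 0 * norD ψ (Euc.snoc ξ t)| ≤ 1 := by
  obtain ⟨hsm, hsc, hsub⟩ := hψ
  set eN := EuclideanSpace.single (Fin.last d) (1:ℝ) with heN
  set h : ℝ → ℝ := fun t => ⟪ψ (Euc.snoc ξ t), eN⟫ with hh
  set h' : ℝ → ℝ := fun t => norD ψ (Euc.snoc ξ t) with hh'
  have hder : ∀ t : ℝ, HasDerivAt h (h' t) t := by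
    intro t
    have hg : HasDerivAt (fun s => ψ (Euc.snoc ξ s))
        (fderiv ℝ ψ (Euc.snoc ξ t) eN) t :=
      (((hsm.differentiable (by simp)) _).hasFDerivAt).comp_hasDerivAt t (hasDerivAt_snoc ξ t)
    have h2 := hg.inner ℝ (hasDerivAt_const t eN)
    simp only [inner_zero_right, inner_zero_left, add_zero, zero_add] at h2
    exact h2
  have hconth : Continuous h := (hsm.continuous.comp (contSnocT ξ)).inner continuous_const
  have hconth' : Continuous h' := (cont_fderiv_inner hsm eN eN).comp (contSnocT ξ)
  set w : ℝ → ℝ := fun t => max (1 - t/r) 0 with hw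
  have hcontF : Continuous (fun t => w t * h' t) := contW.mul hconth'
  have hzero : ∀ t ∈ Ioi r, w t * h' t = 0 := by
    intro t ht
    have : 1 - t/r < 0 := by
      rw [sub_neg]
      exact (one_lt_div hr).2 ht
    simp [hw, max_eq_right this.le]
  have hsplit : ∫ t in Ioi (0:ℝ), w t * h' t = ∫ t in Ioc (0:ℝ) r, w t * h' t := by
    rw [← Ioc_union_Ioi_eq_Ioi hr.le,
      setIntegral_union (Ioc_disjoint_Ioi le_rfl) measurableSet_Ioi
        (hcontF.integrableOn_Ioc)
        (by
          rw [integrableOn_congr_fun hzero measurableSet_Ioi]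
          exact integrableOn_zero),
      setIntegral_congr_fun measurableSet_Ioi hzero]
    simp
  have hIoc : ∫ t in Ioc (0:ℝ) r, w t * h' t = ∫ t in (0:ℝ)..r, (1 - t/r) * h' t := by
    rw [intervalIntegral.integral_of_le hr.le]
    refine setIntegral_congr_fun measurableSet_Ioc fun t ht => ?_
    have : 0 ≤ 1 - t/r := by
      rw [sub_nonneg]
      exact (div_le_one hr).2 ht.2
    simp [hw, max_eq_left this]
  have h0 : h 0 = 0 := by
    have hnm : Euc.snoc ξ 0 ∉ tsupport ψ := by
      intro hmem
      have := hsub hmem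
      simp [Set.mem_setOf_eq, snoc_last] at this
    simp [hh, image_eq_zero_of_notMem_tsupport hnm]
  have hparts : ∫ t in (0:ℝ)..r, (1 - t/r) * h' t
      = (1/r) * ∫ t in (0:ℝ)..r, h t := by
    have hu : ∀ t ∈ uIcc (0:ℝ) r, HasDerivAt (fun s => 1 - s/r) (-(1/r)) t := by
      intro t _
      simpa using ((hasDerivAt_id t).div_const r).const_sub 1
    have := intervalIntegral.integral_mul_deriv_eq_deriv_mul hu
      (fun t _ => hder t)
      (intervalIntegrable_const)
      (hconth'.intervalIntegrable 0 r)
    rw [this, intervalIntegral.integral_const_mul, h0, div_self hr.ne']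
    ring
  have hbnd : |(1/r) * ∫ t in (0:ℝ)..r, h t| ≤ 1 := by
    have hle : ∀ t ∈ uIoc (0:ℝ) r, ‖h t‖ ≤ 1 := by
      intro t _
      calc ‖h t‖ ≤ ‖ψ (Euc.snoc ξ t)‖ * ‖eN‖ := by
            simpa [hh] using abs_real_inner_le_norm (ψ (Euc.snoc ξ t)) eN
        _ ≤ 1 := by
            rw [heN, EuclideanSpace.norm_single]
            simpa using hb (Euc.snoc ξ t)
    have h2 := intervalIntegral.norm_integral_le_of_norm_le_const (C := 1) hle
    have h3 : |∫ t in (0:ℝ)..r, h t| ≤ r := by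
      simpa [abs_of_pos hr] using h2
    rw [abs_mul]
    calc |1/r| * |∫ t in (0:ℝ)..r, h t| ≤ |1/r| * r :=
          mul_le_mul_of_nonneg_left h3 (abs_nonneg _)
      _ = 1 := by
          rw [abs_of_pos (by positivity : (0:ℝ) < 1/r)]
          field_simp
  calc |∫ t in Ioi (0:ℝ), w t * h' t| = |(1/r) * ∫ t in (0:ℝ)..r, h t| := by
        rw [hsplit, hIoc, hparts]
    _ ≤ 1 := hbnd

lemma tangential_inner {ϖ : Euc d → ℝ} {ν : Measure (Euc d)} {σ : Euc d → Euc d}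
    (hBV : IsBVRep Set.univ ϖ ν σ) [IsFiniteMeasure ν]
    {ψ : Euc (d+1) → Euc (d+1)} (hsm : ContDiff ℝ (⊤ : ℕ∞) ψ) (hsc : HasCompactSupport ψ)
    (hb : ∀ x, ‖ψ x‖ ≤ 1) (t : ℝ) :
    |∫ ξ, ϖ ξ * tanD ψ (Euc.snoc ξ t)| ≤ (ν Set.univ).toReal := by
  set Φ : Euc d → Euc d := fun η => initL d (ψ (Euc.snoc η t)) with hΦ
  have key : ∫ ξ, ϖ ξ * tanD ψ (Euc.snoc ξ t) = - ∫ ξ, (⟪σ ξ, Φ ξ⟫ : ℝ) ∂ν := by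
    have h1 : ∫ ξ, ϖ ξ * tanD ψ (Euc.snoc ξ t) = ∫ ξ, ϖ ξ * divg Φ ξ := by
      refine integral_congr_ae (Eventually.of_forall fun ξ => ?_)
      simp only [hΦ]
      rw [divg_Phi hsm t ξ]
    rw [h1, ← hBV.2 Φ (Phi_testVF hsm hsc t), Measure.restrict_univ]
  rw [key, abs_neg]
  have h2 : |∫ ξ, (⟪σ ξ, Φ ξ⟫ : ℝ) ∂ν| ≤ ∫ ξ, ‖(⟪σ ξ, Φ ξ⟫ : ℝ)‖ ∂ν :=
    norm_integral_le_integral_norm (μ := ν) fun ξ => (⟪σ ξ, Φ ξ⟫ : ℝ)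
  refine h2.trans ?_
  have h3 : ∫ ξ, ‖(⟪σ ξ, Φ ξ⟫ : ℝ)‖ ∂ν ≤ ∫ _, (1:ℝ) ∂ν := by
    refine integral_mono_of_nonneg (Eventually.of_forall fun ξ => norm_nonneg _)
      (integrable_const 1) ?_
    filter_upwards [hBV.1] with ξ hξ
    calc ‖(⟪σ ξ, Φ ξ⟫ : ℝ)‖ ≤ ‖σ ξ‖ * ‖Φ ξ‖ := abs_real_inner_le_norm _ _
      _ ≤ 1 := by
          rw [hξ, one_mul]
          exact norm_Phi_le hb t _
  simpa [Measure.real] using h3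

lemma halfspace_preimage :
    (Ed d).symm ⁻¹' {x : Euc (d+1) | 0 < x (Fin.last d)}
      = (Ioi (0:ℝ)) ×ˢ (univ : Set (Euc d)) := by
  ext ⟨t, η⟩
  simp only [mem_preimage, mem_setOf_eq, Ed_symm_apply, snoc_last, prodMk_mem_set_prod_eq,
    mem_Ioi, mem_univ, and_true]

lemma setIntegral_halfspace (g : Euc (d+1) → ℝ) :
    ∫ x in {x : Euc (d+1) | 0 < x (Fin.last d)}, g x
      = ∫ p, g (Euc.snoc p.2 p.1)
          ∂((volume.restrict (Ioi (0:ℝ))).prod (volume : Measure (Euc d))) := by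
  have h := (MeasurePreserving.symm (Ed d) hEd).setIntegral_preimage_emb
    (MeasurableEquiv.measurableEmbedding _) g {x : Euc (d+1) | 0 < x (Fin.last d)}
  rw [← h, halfspace_preimage]
  rw [Measure.volume_eq_prod, ← Measure.prod_restrict, Measure.restrict_univ]
  refine integral_congr_ae (Eventually.of_forall fun p => ?_)
  obtain ⟨t, η⟩ := p
  show g ((Ed d).symm (t, η)) = g (Euc.snoc η t)
  rw [Ed_symm_apply]

lemma setLIntegral_halfspace (g : Euc (d+1) → ℝ≥0∞) :
    ∫⁻ x in {x : Euc (d+1) | 0 < x (Fin.last d)}, g x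
      = ∫⁻ p, g (Euc.snoc p.2 p.1)
          ∂((volume.restrict (Ioi (0:ℝ))).prod (volume : Measure (Euc d))) := by
  have h := (MeasurePreserving.symm (Ed d) hEd).setLIntegral_comp_preimage_emb
    (MeasurableEquiv.measurableEmbedding _) g {x : Euc (d+1) | 0 < x (Fin.last d)}
  rw [← h, halfspace_preimage]
  rw [Measure.volume_eq_prod, ← Measure.prod_restrict, Measure.restrict_univ]
  refine lintegral_congr fun p => ?_
  obtain ⟨t, η⟩ := p
  show g ((Ed d).symm (t, η)) = g (Euc.snoc η t)
  rw [Ed_symm_apply]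

lemma intW {r : ℝ} (hr : 0 < r) :
    Integrable (fun t => max (1 - t/r) 0) (volume.restrict (Ioi (0:ℝ))) := by
  have hind : Integrable ((Ioc (0:ℝ) r).indicator (fun _ => (1:ℝ)))
      (volume.restrict (Ioi (0:ℝ))) := by
    rw [integrable_indicator_iff measurableSet_Ioc]
    refine integrableOn_const (ne_of_lt ?_)
    calc (volume.restrict (Ioi (0:ℝ))) (Ioc 0 r) ≤ volume (Ioc (0:ℝ) r) :=
          Measure.restrict_le_self _
      _ < ⊤ := by rw [Real.volume_Ioc]; exact ENNReal.ofReal_lt_top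
  refine Integrable.mono' hind contW.aestronglyMeasurable ?_
  rw [ae_restrict_iff' measurableSet_Ioi]
  refine Eventually.of_forall fun t ht => ?_
  rw [Real.norm_eq_abs, abs_of_nonneg (le_max_right _ _)]
  by_cases h : t ≤ r
  · have h1 : max (1 - t/r) 0 ≤ 1 := by
      apply max_le _ zero_le_one
      have : 0 ≤ t/r := div_nonneg (le_of_lt ht) hr.le
      linarith
    rw [indicator_of_mem (mem_Ioc.2 ⟨mem_Ioi.1 ht, h⟩)]
    exact h1
  · push_neg at h
    have h1 : max (1 - t/r) 0 = 0 := max_eq_right (by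
      rw [sub_nonpos]
      exact ((one_lt_div hr).2 h).le)
    have h2 : t ∉ Ioc (0:ℝ) r := fun hc => absurd (mem_Ioc.1 hc).2 (not_le.2 h)
    rw [h1, indicator_of_notMem h2]

lemma contSnocP : Continuous (fun p : ℝ × Euc d => Euc.snoc p.2 p.1) := by
  have h : (fun p : ℝ × Euc d => Euc.snoc p.2 p.1)
      = fun p => snocL d p.2 + p.1 • EuclideanSpace.single (Fin.last d) (1:ℝ) :=
    funext fun p => snoc_eq p.2 p.1
  rw [h]
  exact ((snocL d).continuous.comp continuous_snd).add (continuous_fst.smul continuous_const)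

lemma integrable_piece {r : ℝ} (hr : 0 < r) {ϖ : Euc d → ℝ} (hϖ1 : Integrable ϖ volume)
    {G : Euc (d+1) → ℝ} (hGc : Continuous G) (hGb : ∃ C, ∀ x, ‖G x‖ ≤ C) :
    Integrable (fun p : ℝ × Euc d => max (1 - p.1/r) 0 * ϖ p.2 * G (Euc.snoc p.2 p.1))
      ((volume.restrict (Ioi (0:ℝ))).prod volume) := by
  have hbase : Integrable (fun p : ℝ × Euc d => max (1 - p.1/r) 0 * ϖ p.2)
      ((volume.restrict (Ioi (0:ℝ))).prod volume) := (intW hr).mul_prod hϖ1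
  have hG : AEStronglyMeasurable (fun p : ℝ × Euc d => G (Euc.snoc p.2 p.1))
      ((volume.restrict (Ioi (0:ℝ))).prod volume) :=
    (hGc.comp contSnocP).aestronglyMeasurable
  obtain ⟨C, hC⟩ := hGb
  have := hbase.bdd_mul (c := C) hG (Eventually.of_forall fun p => hC _)
  refine this.congr (Eventually.of_forall fun p => ?_)
  ring

lemma fderiv_zero_of_nmem {n : ℕ} {ψ : Euc n → Euc n} {x : Euc n}
    (hx : x ∉ tsupport ψ) : fderiv ℝ ψ x = 0 := by
  by_contra h
  exact hx (support_fderiv_subset ℝ (by simpa [Function.mem_support] using h))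

lemma tanD_cont {ψ : Euc (d+1) → Euc (d+1)} (hψ : ContDiff ℝ (⊤ : ℕ∞) ψ) :
    Continuous (tanD ψ) :=
  continuous_finset_sum _ fun _ _ => cont_fderiv_inner hψ _ _

lemma tanD_bdd {ψ : Euc (d+1) → Euc (d+1)} (hψ : ContDiff ℝ (⊤ : ℕ∞) ψ)
    (hψc : HasCompactSupport ψ) : ∃ C, ∀ x, ‖tanD ψ x‖ ≤ C := by
  refine HasCompactSupport.exists_bound_of_continuous
    (HasCompactSupport.intro hψc fun x hx => ?_) (tanD_cont hψ)
  unfold tanD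
  simp [fderiv_zero_of_nmem hx]

lemma norD_cont {ψ : Euc (d+1) → Euc (d+1)} (hψ : ContDiff ℝ (⊤ : ℕ∞) ψ) :
    Continuous (norD ψ) := cont_fderiv_inner hψ _ _

lemma norD_bdd {ψ : Euc (d+1) → Euc (d+1)} (hψ : ContDiff ℝ (⊤ : ℕ∞) ψ)
    (hψc : HasCompactSupport ψ) : ∃ C, ∀ x, ‖norD ψ x‖ ≤ C :=
  bdd_fderiv_inner hψ hψc _ _

lemma main_bound {ϖ : Euc d → ℝ} {ν : Measure (Euc d)} {σ : Euc d → Euc d}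
    (hBV : IsBVRep Set.univ ϖ ν σ) [IsFiniteMeasure ν]
    (hϖ1 : Integrable ϖ volume) {r : ℝ} (hr : 0 < r)
    {ψ : Euc (d+1) → Euc (d+1)} (hψ : IsTestVF {x : Euc (d+1) | 0 < x (Fin.last d)} ψ)
    (hb : ∀ x, ‖ψ x‖ ≤ 1) :
    ∫ x in {x : Euc (d+1) | 0 < x (Fin.last d)},
        (max (1 - x (Fin.last d) / r) 0 * ϖ (Euc.init x)) * divg ψ x
      ≤ (∫ ξ, |ϖ ξ|) + r * (ν Set.univ).toReal := by
  obtain ⟨hsm, hsc, hsub⟩ := hψ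
  set B := (ν Set.univ).toReal with hB
  have hB0 : 0 ≤ B := ENNReal.toReal_nonneg
  have h1 : ∫ x in {x : Euc (d+1) | 0 < x (Fin.last d)},
        (max (1 - x (Fin.last d) / r) 0 * ϖ (Euc.init x)) * divg ψ x
      = ∫ p : ℝ × Euc d, max (1 - p.1/r) 0 * ϖ p.2 * divg ψ (Euc.snoc p.2 p.1)
          ∂((volume.restrict (Ioi (0:ℝ))).prod volume) := by
    rw [setIntegral_halfspace
      (fun x => (max (1 - x (Fin.last d) / r) 0 * ϖ (Euc.init x)) * divg ψ x)]
    refine integral_congr_ae (Eventually.of_forall fun p => ?_)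
    simp only [snoc_last, init_snoc]
  have hInt_tan := integrable_piece hr hϖ1 (tanD_cont hsm) (tanD_bdd hsm hsc)
  have hInt_nor := integrable_piece hr hϖ1 (norD_cont hsm) (norD_bdd hsm hsc)
  have hsplit : ∫ p : ℝ × Euc d, max (1 - p.1/r) 0 * ϖ p.2 * divg ψ (Euc.snoc p.2 p.1)
          ∂((volume.restrict (Ioi (0:ℝ))).prod volume)
      = (∫ p : ℝ × Euc d, max (1 - p.1/r) 0 * ϖ p.2 * tanD ψ (Euc.snoc p.2 p.1)
          ∂((volume.restrict (Ioi (0:ℝ))).prod volume))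
        + ∫ p : ℝ × Euc d, max (1 - p.1/r) 0 * ϖ p.2 * norD ψ (Euc.snoc p.2 p.1)
          ∂((volume.restrict (Ioi (0:ℝ))).prod volume) := by
    rw [← integral_add hInt_tan hInt_nor]
    refine integral_congr_ae (Eventually.of_forall fun p => ?_)
    simp only [divg_eq]; ring
  have htan : (∫ p : ℝ × Euc d, max (1 - p.1/r) 0 * ϖ p.2 * tanD ψ (Euc.snoc p.2 p.1)
          ∂((volume.restrict (Ioi (0:ℝ))).prod volume)) ≤ r * B := by
    rw [integral_prod _ hInt_tan]
    have hpt : ∀ t ∈ Ioi (0:ℝ),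
        ‖∫ ξ, max (1 - t/r) 0 * ϖ ξ * tanD ψ (Euc.snoc ξ t)‖
          ≤ (Ioc (0:ℝ) r).indicator (fun _ => B) t := by
      intro t ht
      have he : (fun ξ => max (1 - t/r) 0 * ϖ ξ * tanD ψ (Euc.snoc ξ t))
          = fun ξ => max (1 - t/r) 0 * (ϖ ξ * tanD ψ (Euc.snoc ξ t)) := by
        funext ξ; ring
      rw [he, integral_const_mul, Real.norm_eq_abs, abs_mul,
        abs_of_nonneg (le_max_right _ _)]
      by_cases h : t ≤ r
      · rw [indicator_of_mem (mem_Ioc.2 ⟨mem_Ioi.1 ht, h⟩)]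
        have hw1 : max (1 - t/r) 0 ≤ 1 := by
          apply max_le _ zero_le_one
          have : 0 ≤ t/r := div_nonneg (le_of_lt (mem_Ioi.1 ht)) hr.le
          linarith
        calc max (1 - t/r) 0 * |∫ ξ, ϖ ξ * tanD ψ (Euc.snoc ξ t)|
            ≤ 1 * B := mul_le_mul hw1 (tangential_inner hBV hsm hsc hb t)
              (abs_nonneg _) zero_le_one
          _ = B := one_mul _
      · push_neg at h
        have h1 : max (1 - t/r) 0 = 0 := max_eq_right (by
          rw [sub_nonpos]; exact ((one_lt_div hr).2 h).le)
        have h2 : t ∉ Ioc (0:ℝ) r := fun hc => absurd (mem_Ioc.1 hc).2 (not_le.2 h)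
        rw [h1, indicator_of_notMem h2, zero_mul]
    have hindB : Integrable ((Ioc (0:ℝ) r).indicator (fun _ => B))
        (volume.restrict (Ioi (0:ℝ))) := by
      rw [integrable_indicator_iff measurableSet_Ioc]
      refine integrableOn_const (ne_of_lt ?_)
      calc (volume.restrict (Ioi (0:ℝ))) (Ioc 0 r) ≤ volume (Ioc (0:ℝ) r) :=
            Measure.restrict_le_self _
        _ < ⊤ := by rw [Real.volume_Ioc]; exact ENNReal.ofReal_lt_top
    calc ∫ t in Ioi (0:ℝ), ∫ ξ, max (1 - t/r) 0 * ϖ ξ * tanD ψ (Euc.snoc ξ t)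
        ≤ ‖∫ t in Ioi (0:ℝ), ∫ ξ, max (1 - t/r) 0 * ϖ ξ * tanD ψ (Euc.snoc ξ t)‖ :=
          le_abs_self _
      _ ≤ ∫ t in Ioi (0:ℝ), ‖∫ ξ, max (1 - t/r) 0 * ϖ ξ * tanD ψ (Euc.snoc ξ t)‖ :=
          norm_integral_le_integral_norm _
      _ ≤ ∫ t in Ioi (0:ℝ), (Ioc (0:ℝ) r).indicator (fun _ => B) t := by
          refine integral_mono_of_nonneg (Eventually.of_forall fun t => norm_nonneg _)
            hindB ?_
          exact (ae_restrict_iff' measurableSet_Ioi).2 (Eventually.of_forall hpt)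
      _ = r * B := by
          rw [integral_indicator measurableSet_Ioc, setIntegral_const, measureReal_def,
            Measure.restrict_apply measurableSet_Ioc,
            inter_eq_left.2 Ioc_subset_Ioi_self, Real.volume_Ioc, smul_eq_mul,
            ENNReal.toReal_ofReal (by linarith)]
          ring
  have hnor : (∫ p : ℝ × Euc d, max (1 - p.1/r) 0 * ϖ p.2 * norD ψ (Euc.snoc p.2 p.1)
          ∂((volume.restrict (Ioi (0:ℝ))).prod volume)) ≤ ∫ ξ, |ϖ ξ| := by
    rw [integral_prod_symm _ hInt_nor]
    have hpt : ∀ ξ : Euc d,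
        ‖∫ t in Ioi (0:ℝ), max (1 - t/r) 0 * ϖ ξ * norD ψ (Euc.snoc ξ t)‖ ≤ |ϖ ξ| := by
      intro ξ
      have he : (fun t => max (1 - t/r) 0 * ϖ ξ * norD ψ (Euc.snoc ξ t))
          = fun t => ϖ ξ * (max (1 - t/r) 0 * norD ψ (Euc.snoc ξ t)) := by
        funext t; ring
      rw [he, integral_const_mul, Real.norm_eq_abs, abs_mul]
      calc |ϖ ξ| * |∫ t in Ioi (0:ℝ), max (1 - t/r) 0 * norD ψ (Euc.snoc ξ t)|
          ≤ |ϖ ξ| * 1 := mul_le_mul_of_nonneg_left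
            (normal_1d hr ⟨hsm, hsc, hsub⟩ hb ξ) (abs_nonneg _)
        _ = |ϖ ξ| := mul_one _
    calc ∫ ξ, ∫ t in Ioi (0:ℝ), max (1 - t/r) 0 * ϖ ξ * norD ψ (Euc.snoc ξ t)
        ≤ ‖∫ ξ, ∫ t in Ioi (0:ℝ), max (1 - t/r) 0 * ϖ ξ * norD ψ (Euc.snoc ξ t)‖ :=
          le_abs_self _
      _ ≤ ∫ ξ, ‖∫ t in Ioi (0:ℝ), max (1 - t/r) 0 * ϖ ξ * norD ψ (Euc.snoc ξ t)‖ :=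
          norm_integral_le_integral_norm _
      _ ≤ ∫ ξ, |ϖ ξ| := integral_mono_of_nonneg
          (Eventually.of_forall fun ξ => norm_nonneg _) hϖ1.abs
          (Eventually.of_forall hpt)
  rw [h1, hsplit]
  linarith

lemma l2_bound {ϖ : Euc d → ℝ} (hϖ2 : MemLp ϖ 2 (volume : Measure (Euc d)))
    (hϖ1 : Integrable ϖ volume) {r : ℝ} (hr : 0 < r) :
    ∫ x in {x : Euc (d+1) | 0 < x (Fin.last d)},
        (max (1 - x (Fin.last d) / r) 0 * ϖ (Euc.init x))^2
      ≤ r * ∫ ξ, (ϖ ξ)^2 := by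
  set A := ∫ ξ, (ϖ ξ)^2 with hA
  have hA0 : 0 ≤ A := integral_nonneg fun ξ => sq_nonneg _
  have h1 : ∫ x in {x : Euc (d+1) | 0 < x (Fin.last d)},
        (max (1 - x (Fin.last d) / r) 0 * ϖ (Euc.init x))^2
      = ∫ p : ℝ × Euc d, (max (1 - p.1/r) 0 * ϖ p.2)^2
          ∂((volume.restrict (Ioi (0:ℝ))).prod volume) := by
    rw [setIntegral_halfspace (fun x => (max (1 - x (Fin.last d) / r) 0 * ϖ (Euc.init x))^2)]
    refine integral_congr_ae (Eventually.of_forall fun p => ?_)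
    simp only [snoc_last, init_snoc]
  have hmul : AEStronglyMeasurable (fun p : ℝ × Euc d => max (1 - p.1/r) 0 * ϖ p.2)
      ((volume.restrict (Ioi (0:ℝ))).prod volume) :=
    ((contW.comp continuous_fst).aestronglyMeasurable).mul
      (hϖ1.1.comp_quasiMeasurePreserving Measure.quasiMeasurePreserving_snd)
  have hsq : AEStronglyMeasurable (fun p : ℝ × Euc d => (max (1 - p.1/r) 0 * ϖ p.2)^2)
      ((volume.restrict (Ioi (0:ℝ))).prod volume) :=
    (hmul.mul hmul).congr (Eventually.of_forall fun p => (pow_two _).symm)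
  have h2 : ∫ p : ℝ × Euc d, (max (1 - p.1/r) 0 * ϖ p.2)^2
          ∂((volume.restrict (Ioi (0:ℝ))).prod volume)
      = (∫⁻ p : ℝ × Euc d, ENNReal.ofReal ((max (1 - p.1/r) 0 * ϖ p.2)^2)
          ∂((volume.restrict (Ioi (0:ℝ))).prod volume)).toReal :=
    integral_eq_lintegral_of_nonneg_ae (Eventually.of_forall fun p => sq_nonneg _) hsq
  have h3 : ∫⁻ p : ℝ × Euc d, ENNReal.ofReal ((max (1 - p.1/r) 0 * ϖ p.2)^2)
          ∂((volume.restrict (Ioi (0:ℝ))).prod volume)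
      = (∫⁻ t, ENNReal.ofReal ((max (1 - t/r) 0)^2) ∂(volume.restrict (Ioi (0:ℝ))))
        * ∫⁻ ξ, ENNReal.ofReal ((ϖ ξ)^2) := by
    have hfm : AEMeasurable (fun t : ℝ => ENNReal.ofReal ((max (1 - t/r) 0)^2))
        (volume.restrict (Ioi (0:ℝ))) :=
      ((contW.pow 2).measurable.ennreal_ofReal).aemeasurable
    have hgm : AEMeasurable (fun ξ : Euc d => ENNReal.ofReal ((ϖ ξ)^2))
        (volume : Measure (Euc d)) :=
      ENNReal.measurable_ofReal.comp_aemeasurable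
        ((hϖ1.aemeasurable.mul hϖ1.aemeasurable).congr
          (Eventually.of_forall fun ξ => (pow_two (ϖ ξ)).symm))
    rw [← lintegral_prod_mul hfm hgm]
    refine lintegral_congr fun p => ?_
    rw [mul_pow, ENNReal.ofReal_mul (sq_nonneg _)]
  have hf1 : ∫⁻ t, ENNReal.ofReal ((max (1 - t/r) 0)^2) ∂(volume.restrict (Ioi (0:ℝ)))
      ≤ ENNReal.ofReal r := by
    have hb : ∀ᵐ t ∂(volume.restrict (Ioi (0:ℝ))),
        ENNReal.ofReal ((max (1 - t/r) 0)^2)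
          ≤ (Ioc (0:ℝ) r).indicator (fun _ => (1:ℝ≥0∞)) t := by
      rw [ae_restrict_iff' measurableSet_Ioi]
      refine Eventually.of_forall fun t ht => ?_
      by_cases h : t ≤ r
      · rw [indicator_of_mem (mem_Ioc.2 ⟨mem_Ioi.1 ht, h⟩)]
        rw [ENNReal.ofReal_le_one]
        have hw1 : max (1 - t/r) 0 ≤ 1 := by
          apply max_le _ zero_le_one
          have : 0 ≤ t/r := div_nonneg (le_of_lt (mem_Ioi.1 ht)) hr.le
          linarith
        calc (max (1 - t/r) 0)^2 ≤ 1^2 :=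
              pow_le_pow_left₀ (le_max_right _ _) hw1 2
          _ = 1 := one_pow 2
      · push_neg at h
        have h1 : max (1 - t/r) 0 = 0 := max_eq_right (by
          rw [sub_nonpos]; exact ((one_lt_div hr).2 h).le)
        have h2 : t ∉ Ioc (0:ℝ) r := fun hc => absurd (mem_Ioc.1 hc).2 (not_le.2 h)
        rw [h1, indicator_of_notMem h2]
        simp
    calc ∫⁻ t, ENNReal.ofReal ((max (1 - t/r) 0)^2) ∂(volume.restrict (Ioi (0:ℝ)))
        ≤ ∫⁻ t, (Ioc (0:ℝ) r).indicator (fun _ => (1:ℝ≥0∞)) t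
            ∂(volume.restrict (Ioi (0:ℝ))) := lintegral_mono_ae hb
      _ = ENNReal.ofReal r := by
          rw [lintegral_indicator measurableSet_Ioc, setLIntegral_one,
            Measure.restrict_apply measurableSet_Ioc,
            inter_eq_left.2 Ioc_subset_Ioi_self, Real.volume_Ioc, sub_zero]
  have hf2 : ∫⁻ ξ, ENNReal.ofReal ((ϖ ξ)^2) = ENNReal.ofReal A :=
    (ofReal_integral_eq_lintegral_ofReal hϖ2.integrable_sq
      (Eventually.of_forall fun ξ => sq_nonneg _)).symm
  rw [h1, h2]
  refine ENNReal.toReal_le_of_le_ofReal (by positivity) ?_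
  rw [h3, hf2, ENNReal.ofReal_mul hr.le]
  exact mul_le_mul_left hf1 _

/-- Lemma 3.1: for ϖ ∈ H¹ ∩ BV ∩ L¹(ℝ^{N-1}) and any τ > 0 there is
`0 < r₀ ≤ τ` such that for all `r ∈ (0,r₀]` the extension `⟦ϖ⟧_r` vanishes a.e. where
`ξ_N > r`, has trace ϖ on `{ξ_N = 0}`, has L²-norm ≤ τ on the half-space, and total
variation `|D⟦ϖ⟧_r|(ℝ^N_+) ≤ ‖ϖ‖_{L¹} + τ`. -/
theorem stmt3 {d : ℕ} (hd : 1 ≤ d) (ϖ : Euc d → ℝ) (Gϖ : Euc d → Euc d)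
    (hgrad : HasWeakGradOn ϖ Gϖ Set.univ)
    (hϖ2 : MemLp ϖ 2 (volume : Measure (Euc d)))
    (hG2 : MemLp Gϖ 2 (volume : Measure (Euc d)))
    (ν : Measure (Euc d)) (σ : Euc d → Euc d)
    (hBV : IsBVRep Set.univ ϖ ν σ) (hν : IsFiniteMeasure ν)
    (hϖ1 : Integrable ϖ (volume : Measure (Euc d)))
    (τ : ℝ) (hτ : 0 < τ) :
    ∃ r₀ : ℝ, 0 < r₀ ∧ r₀ ≤ τ ∧ ∀ r ∈ Set.Ioc (0:ℝ) r₀,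
      (∀ᵐ x : Euc (d+1), r < x (Fin.last d) →
        max (1 - x (Fin.last d) / r) 0 * ϖ (Euc.init x) = 0) ∧
      (∀ᵐ ξ : Euc d, Filter.Tendsto (fun t : ℝ => max (1 - t / r) 0 * ϖ ξ)
        (𝓝[>] (0:ℝ)) (𝓝 (ϖ ξ))) ∧
      Real.sqrt (∫ x in {x : Euc (d+1) | 0 < x (Fin.last d)},
        (max (1 - x (Fin.last d) / r) 0 * ϖ (Euc.init x))^2) ≤ τ ∧
      eTV (fun x => max (1 - x (Fin.last d) / r) 0 * ϖ (Euc.init x))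
          {x : Euc (d+1) | 0 < x (Fin.last d)}
        ≤ ENNReal.ofReal ((∫ ξ, |ϖ ξ|) + τ) := by
  have := hν
  set A := ∫ ξ, (ϖ ξ)^2 with hA
  have hA0 : 0 ≤ A := integral_nonneg fun ξ => sq_nonneg _
  set B := (ν Set.univ).toReal with hB
  have hB0 : 0 ≤ B := ENNReal.toReal_nonneg
  refine ⟨min τ (min (τ^2/(A+1)) (τ/(B+1))), by positivity, min_le_left _ _, ?_⟩
  rintro r ⟨hr0, hrle⟩
  have hrA : r ≤ τ^2/(A+1) := hrle.trans ((min_le_right _ _).trans (min_le_left _ _))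
  have hrB : r ≤ τ/(B+1) := hrle.trans ((min_le_right _ _).trans (min_le_right _ _))
  refine ⟨?_, ?_, ?_, ?_⟩
  · refine Eventually.of_forall fun x hx => ?_
    have hneg : 1 - x (Fin.last d) / r < 0 := by
      rw [sub_neg]; exact (one_lt_div hr0).2 hx
    rw [max_eq_right hneg.le, zero_mul]
  · refine Eventually.of_forall fun ξ => ?_
    have h1 : max (1 - (0:ℝ)/r) 0 = 1 := by norm_num
    have h2 : Tendsto (fun t : ℝ => max (1 - t/r) 0) (𝓝 0) (𝓝 1) := by
      have h3 := (contW (r := r)).tendsto 0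
      rwa [h1] at h3
    have hc : Tendsto (fun t : ℝ => max (1 - t / r) 0 * ϖ ξ) (𝓝 0) (𝓝 (ϖ ξ)) := by
      simpa using h2.mul_const (ϖ ξ)
    exact hc.mono_left nhdsWithin_le_nhds
  · have h := l2_bound hϖ2 hϖ1 hr0
    have h2 : r * A ≤ τ^2 := by
      calc r * A ≤ (τ^2/(A+1)) * A := mul_le_mul_of_nonneg_right hrA hA0
        _ ≤ τ^2 := by
          rw [div_mul_eq_mul_div, div_le_iff₀ (by linarith)]
          nlinarith
    calc Real.sqrt (∫ x in {x : Euc (d+1) | 0 < x (Fin.last d)},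
          (max (1 - x (Fin.last d) / r) 0 * ϖ (Euc.init x))^2)
        ≤ Real.sqrt (τ^2) := Real.sqrt_le_sqrt (h.trans h2)
      _ = τ := Real.sqrt_sq hτ.le
  · have h2 : r * B ≤ τ := by
      calc r * B ≤ (τ/(B+1)) * B := mul_le_mul_of_nonneg_right hrB hB0
        _ ≤ τ := by
          rw [div_mul_eq_mul_div, div_le_iff₀ (by linarith)]
          nlinarith
    unfold eTV
    refine iSup_le ?_
    rintro ⟨ψ, hψ, hb⟩
    refine ENNReal.ofReal_le_ofReal ?_
    have h := main_bound hBV hϖ1 hr0 hψ hb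
    calc ∫ x in {x : Euc (d+1) | 0 < x (Fin.last d)},
          (fun x => max (1 - x (Fin.last d) / r) 0 * ϖ (Euc.init x)) x * divg ψ x
        = ∫ x in {x : Euc (d+1) | 0 < x (Fin.last d)},
          (max (1 - x (Fin.last d) / r) 0 * ϖ (Euc.init x)) * divg ψ x := rfl
      _ ≤ (∫ ξ, |ϖ ξ|) + r * B := h
      _ ≤ (∫ ξ, |ϖ ξ|) + τ := by linarith
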